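/- arXiv:2107.06117 — 2 statements merged into one kernel-verified Lean document; each statement's English description precedes it below -/
import Mathlib

section
/- Let λ ≠ 0 and μ be real numbers with λ² ≠ -4μ, and set δ(x,y) = 1 + μ(x²+y²). Suppose D = {δ > 0} is connected and C₁, C₂ : D → ℝ are smooth functions on D satisfying ∂ₓC₁ = (2μ + λ²/2)·(y/δ)·C₂, ∂ₓC₂ = -(2μ + λ²/2)·(y/δ)·C₁, ∂_yC₁ = -(2μ + λ²/2)·(x/δ)·C₂, ∂_yC₂ = (2μ + λ²/2)·(x/δ)·C₁. Then C₁ and C₂ are identically zero on D. -/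
noncomputable section

def pdx (f : ℝ × ℝ → ℝ) (p : ℝ × ℝ) : ℝ := deriv (fun t => f (t, p.2)) p.1
def pdy (f : ℝ × ℝ → ℝ) (p : ℝ × ℝ) : ℝ := deriv (fun t => f (p.1, t)) p.2

lemma myFderivApply (f : ℝ × ℝ → ℝ) (p : ℝ × ℝ) (hf : DifferentiableAt ℝ f p) (v : ℝ × ℝ) :
    fderiv ℝ f p v = v.1 * pdx f p + v.2 * pdy f p := by
  have hx : HasDerivAt (fun t => f (t, p.2)) (fderiv ℝ f p (1, 0)) p.1 := by
    have hg : HasDerivAt (fun t : ℝ => ((t, p.2) : ℝ × ℝ)) ((1 : ℝ), (0 : ℝ)) p.1 :=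
      (hasDerivAt_id p.1).prodMk (hasDerivAt_const p.1 p.2)
    have hf' : HasFDerivAt f (fderiv ℝ f p) ((p.1, p.2)) := by
      rw [Prod.mk.eta]; exact hf.hasFDerivAt
    exact hf'.comp_hasDerivAt p.1 hg
  have hy : HasDerivAt (fun t => f (p.1, t)) (fderiv ℝ f p (0, 1)) p.2 := by
    have hg : HasDerivAt (fun t : ℝ => ((p.1, t) : ℝ × ℝ)) ((0 : ℝ), (1 : ℝ)) p.2 :=
      (hasDerivAt_const p.2 p.1).prodMk (hasDerivAt_id p.2)
    have hf' : HasFDerivAt f (fderiv ℝ f p) ((p.1, p.2)) := by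
      rw [Prod.mk.eta]; exact hf.hasFDerivAt
    exact hf'.comp_hasDerivAt p.2 hg
  have h1 : pdx f p = fderiv ℝ f p (1, 0) := hx.deriv
  have h2 : pdy f p = fderiv ℝ f p (0, 1) := hy.deriv
  have hv : v = v.1 • ((1 : ℝ), (0 : ℝ)) + v.2 • ((0 : ℝ), (1 : ℝ)) := by
    apply Prod.ext <;> simp
  rw [h1, h2]; conv_lhs => rw [hv]
  rw [map_add, map_smul, map_smul, smul_eq_mul, smul_eq_mul]

theorem stmt2 (lam mu : ℝ) (hlam : lam ≠ 0) (hne : lam ^ 2 ≠ -4 * mu)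
    (del : ℝ × ℝ → ℝ) (hdel : ∀ p, del p = 1 + mu * (p.1 ^ 2 + p.2 ^ 2))
    (D : Set (ℝ × ℝ)) (hD : D = {p | del p > 0}) (hconn : IsConnected D)
    (C₁ C₂ : ℝ × ℝ → ℝ)
    (hC₁ : ContDiffOn ℝ (⊤ : ℕ∞) C₁ D) (hC₂ : ContDiffOn ℝ (⊤ : ℕ∞) C₂ D)
    (h1 : ∀ p ∈ D, pdx C₁ p = (2 * mu + lam ^ 2 / 2) * (p.2 / del p) * C₂ p)
    (h2 : ∀ p ∈ D, pdx C₂ p = -(2 * mu + lam ^ 2 / 2) * (p.2 / del p) * C₁ p)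
    (h3 : ∀ p ∈ D, pdy C₁ p = -(2 * mu + lam ^ 2 / 2) * (p.1 / del p) * C₂ p)
    (h4 : ∀ p ∈ D, pdy C₂ p = (2 * mu + lam ^ 2 / 2) * (p.1 / del p) * C₁ p) :
    ∀ p ∈ D, C₁ p = 0 ∧ C₂ p = 0 := by
  set k : ℝ := 2 * mu + lam ^ 2 / 2 with hkdef
  have hk0 : k ≠ 0 := by
    intro h; apply hne; rw [hkdef] at h; nlinarith [h]
  -- D is open
  have hdelc : Continuous del := by
    have : del = fun p : ℝ × ℝ => 1 + mu * (p.1 ^ 2 + p.2 ^ 2) := funext hdel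
    rw [this]; continuity
  have hDopen : IsOpen D := by
    rw [hD]; exact isOpen_lt continuous_const hdelc
  -- differentiability
  have hd1 : ∀ p ∈ D, DifferentiableAt ℝ C₁ p := fun p hp =>
    (hC₁.contDiffAt (hDopen.mem_nhds hp)).differentiableAt (by simp)
  have hd2 : ∀ p ∈ D, DifferentiableAt ℝ C₂ p := fun p hp =>
    (hC₂.contDiffAt (hDopen.mem_nhds hp)).differentiableAt (by simp)
  -- D is convex
  have hDconv : Convex ℝ D := by
    rcases le_or_gt 0 mu with hmu | hmu
    · have hU : D = Set.univ := by
        rw [hD]; ext p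
        simp only [Set.mem_setOf_eq, Set.mem_univ, iff_true, gt_iff_lt, hdel p]
        nlinarith [sq_nonneg p.1, sq_nonneg p.2]
      rw [hU]; exact convex_univ
    · intro p hp q hq a b ha hb hab
      rw [hD, Set.mem_setOf_eq] at hp hq ⊢
      rw [hdel] at hp hq ⊢
      simp only [Prod.smul_fst, Prod.smul_snd, Prod.fst_add, Prod.snd_add, smul_eq_mul]
      have hb' : b = 1 - a := by linarith
      subst hb'
      have hpos : 0 < a * (1 + mu * (p.1 ^ 2 + p.2 ^ 2))
          + (1 - a) * (1 + mu * (q.1 ^ 2 + q.2 ^ 2)) := by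
        rcases ha.lt_or_eq with h | h
        · nlinarith [mul_pos h hp, mul_nonneg hb hq.le]
        · rw [← h]; simpa using hq
      nlinarith [hpos,
        mul_nonneg (neg_nonneg.mpr hmu.le)
          (mul_nonneg (mul_nonneg ha hb) (sq_nonneg (p.1 - q.1))),
        mul_nonneg (neg_nonneg.mpr hmu.le)
          (mul_nonneg (mul_nonneg ha hb) (sq_nonneg (p.2 - q.2)))]
  -- F = C₁² + C₂² has zero derivative on D
  set F : ℝ × ℝ → ℝ := fun p => C₁ p * C₁ p + C₂ p * C₂ p with hFdef
  have hFd : ∀ p ∈ D, HasFDerivAt F (0 : ℝ × ℝ →L[ℝ] ℝ) p := by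
    intro p hp
    have hh1 := (hd1 p hp).hasFDerivAt
    have hh2 := (hd2 p hp).hasFDerivAt
    have hcomb := (hh1.mul hh1).add (hh2.mul hh2)
    have hL : (C₁ p • fderiv ℝ C₁ p + C₁ p • fderiv ℝ C₁ p)
        + (C₂ p • fderiv ℝ C₂ p + C₂ p • fderiv ℝ C₂ p) = 0 := by
      apply ContinuousLinearMap.ext
      intro v
      simp only [ContinuousLinearMap.add_apply, ContinuousLinearMap.smul_apply,
        ContinuousLinearMap.zero_apply, smul_eq_mul,
        myFderivApply C₁ p (hd1 p hp) v, myFderivApply C₂ p (hd2 p hp) v,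
        h1 p hp, h2 p hp, h3 p hp, h4 p hp]
      ring
    rw [← hL]
    exact hcomb
  -- F is constant on D
  have hFconst : ∀ p ∈ D, ∀ q ∈ D, F p = F q := by
    intro p hp q hq
    refine hDconv.is_const_of_fderivWithin_eq_zero
      (fun x hx => ((hFd x hx).differentiableAt).differentiableWithinAt)
      (fun x hx => ?_) hp hq
    rw [fderivWithin_of_isOpen hDopen hx]
    exact (hFd x hx).fderiv
  -- choose a small radius
  set s : ℝ := min (1 / (2 * (|mu| + 1))) (1 / (4 * (|k| + 1))) with hsdef
  have hs0 : 0 < s := lt_min (by positivity) (by positivity)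
  have hA : s * (2 * (|mu| + 1)) ≤ 1 := by
    rw [← le_div_iff₀ (by positivity)]; exact min_le_left _ _
  have hB : s * (4 * (|k| + 1)) ≤ 1 := by
    rw [← le_div_iff₀ (by positivity)]; exact min_le_right _ _
  have hmus : -|mu| * s ≤ mu * s :=
    mul_le_mul_of_nonneg_right (neg_abs_le mu) hs0.le
  have hdr : 0 < 1 + mu * s := by nlinarith [abs_nonneg mu]
  set r : ℝ := Real.sqrt s with hrdef
  have hr2 : r ^ 2 = s := Real.sq_sqrt hs0.le
  set ω : ℝ := k * s / (1 + mu * s) with hωdef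
  have hω0 : ω ≠ 0 := div_ne_zero (mul_ne_zero hk0 hs0.ne') hdr.ne'
  have hω1 : |ω| < 1 := by
    rw [hωdef, abs_div, abs_of_pos hdr, div_lt_one hdr, abs_mul, abs_of_pos hs0]
    nlinarith [abs_nonneg k, abs_nonneg mu]
  -- the circle
  set γ : ℝ → ℝ × ℝ := fun θ => (r * Real.cos θ, r * Real.sin θ) with hγdef
  have hsq : ∀ θ : ℝ, (r * Real.cos θ) ^ 2 + (r * Real.sin θ) ^ 2 = s := by
    intro θ
    have h := Real.sin_sq_add_cos_sq θ
    rw [← hr2]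
    linear_combination r ^ 2 * h
  have hdelγ : ∀ θ, del (γ θ) = 1 + mu * s := by
    intro θ
    rw [hdel]
    show 1 + mu * ((r * Real.cos θ) ^ 2 + (r * Real.sin θ) ^ 2) = 1 + mu * s
    rw [hsq θ]
  have hγD : ∀ θ, γ θ ∈ D := by
    intro θ; rw [hD]
    show del (γ θ) > 0
    rw [hdelγ θ]; exact hdr
  -- derivatives along the circle
  have hγder : ∀ θ, HasDerivAt γ (r * (-Real.sin θ), r * Real.cos θ) θ := fun θ =>
    ((Real.hasDerivAt_cos θ).const_mul r).prodMk ((Real.hasDerivAt_sin θ).const_mul r)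
  have hc1 : ∀ θ, HasDerivAt (fun θ => C₁ (γ θ)) (-ω * C₂ (γ θ)) θ := by
    intro θ
    have h := ((hd1 (γ θ) (hγD θ)).hasFDerivAt).comp_hasDerivAt θ (hγder θ)
    have hval : fderiv ℝ C₁ (γ θ) (r * (-Real.sin θ), r * Real.cos θ)
        = -ω * C₂ (γ θ) := by
      rw [myFderivApply C₁ (γ θ) (hd1 (γ θ) (hγD θ)), h1 (γ θ) (hγD θ), h3 (γ θ) (hγD θ),
        hdelγ θ]
      show r * (-Real.sin θ) * (k * ((γ θ).2 / (1 + mu * s)) * C₂ (γ θ))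
          + r * Real.cos θ * (-k * ((γ θ).1 / (1 + mu * s)) * C₂ (γ θ)) = -ω * C₂ (γ θ)
      have hg1 : (γ θ).1 = r * Real.cos θ := rfl
      have hg2 : (γ θ).2 = r * Real.sin θ := rfl
      rw [hg1, hg2, hωdef, ← hsq θ]
      ring
    rw [← hval]
    exact h
  have hc2 : ∀ θ, HasDerivAt (fun θ => C₂ (γ θ)) (ω * C₁ (γ θ)) θ := by
    intro θ
    have h := ((hd2 (γ θ) (hγD θ)).hasFDerivAt).comp_hasDerivAt θ (hγder θ)
    have hval : fderiv ℝ C₂ (γ θ) (r * (-Real.sin θ), r * Real.cos θ)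
        = ω * C₁ (γ θ) := by
      rw [myFderivApply C₂ (γ θ) (hd2 (γ θ) (hγD θ)), h2 (γ θ) (hγD θ), h4 (γ θ) (hγD θ),
        hdelγ θ]
      show r * (-Real.sin θ) * (-k * ((γ θ).2 / (1 + mu * s)) * C₁ (γ θ))
          + r * Real.cos θ * (k * ((γ θ).1 / (1 + mu * s)) * C₁ (γ θ)) = ω * C₁ (γ θ)
      have hg1 : (γ θ).1 = r * Real.cos θ := rfl
      have hg2 : (γ θ).2 = r * Real.sin θ := rfl
      rw [hg1, hg2, hωdef, ← hsq θ]
      ring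
    rw [← hval]
    exact h
  -- the rotated functions are constant
  set u : ℝ → ℝ := fun θ => C₁ (γ θ) * Real.cos (ω * θ) + C₂ (γ θ) * Real.sin (ω * θ)
    with hudef
  set v : ℝ → ℝ := fun θ => -(C₁ (γ θ)) * Real.sin (ω * θ) + C₂ (γ θ) * Real.cos (ω * θ)
    with hvdef
  have hmul : ∀ θ : ℝ, HasDerivAt (fun t : ℝ => ω * t) ω θ := fun θ => by
    simpa using (hasDerivAt_id θ).const_mul ω
  have hcosω : ∀ θ, HasDerivAt (fun θ => Real.cos (ω * θ)) (-Real.sin (ω * θ) * ω) θ :=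
    fun θ => (Real.hasDerivAt_cos (ω * θ)).comp θ (hmul θ)
  have hsinω : ∀ θ, HasDerivAt (fun θ => Real.sin (ω * θ)) (Real.cos (ω * θ) * ω) θ :=
    fun θ => (Real.hasDerivAt_sin (ω * θ)).comp θ (hmul θ)
  have hu : ∀ θ, HasDerivAt u 0 θ := by
    intro θ
    have h := ((hc1 θ).mul (hcosω θ)).add ((hc2 θ).mul (hsinω θ))
    exact h.congr_deriv (by ring)
  have hv : ∀ θ, HasDerivAt v 0 θ := by
    intro θ
    have h := (((hc1 θ).neg).mul (hsinω θ)).add ((hc2 θ).mul (hcosω θ))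
    exact h.congr_deriv (by simp only [Pi.neg_apply]; ring)
  clear_value s r ω γ u v
  -- u and v are constant, use periodicity
  have huc : u (2 * Real.pi) = u 0 :=
    is_const_of_deriv_eq_zero (fun θ => (hu θ).differentiableAt) (fun θ => (hu θ).deriv) _ _
  have hvc : v (2 * Real.pi) = v 0 :=
    is_const_of_deriv_eq_zero (fun θ => (hv θ).differentiableAt) (fun θ => (hv θ).deriv) _ _
  have hγper : γ (2 * Real.pi) = γ 0 := by
    simp only [hγdef, Real.cos_two_pi, Real.sin_two_pi, Real.cos_zero, Real.sin_zero]
  set a : ℝ := ω * (2 * Real.pi) with hadef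
  clear_value a
  have hu0 : u 0 = C₁ (γ 0) := by
    simp only [hudef, mul_zero, Real.cos_zero, Real.sin_zero, mul_one, mul_zero, add_zero]
  have hv0 : v 0 = C₂ (γ 0) := by
    simp only [hvdef, mul_zero, Real.cos_zero, Real.sin_zero, mul_one, mul_zero, zero_add,
      neg_mul, neg_zero]
  have hu2 : u (2 * Real.pi) = C₁ (γ 0) * Real.cos a + C₂ (γ 0) * Real.sin a := by
    simp only [hudef, hγper, hadef]
  have hv2 : v (2 * Real.pi) = -(C₁ (γ 0)) * Real.sin a + C₂ (γ 0) * Real.cos a := by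
    simp only [hvdef, hγper, hadef]
  have e1 : C₁ (γ 0) * Real.cos a + C₂ (γ 0) * Real.sin a = C₁ (γ 0) := by
    rw [← hu2, huc, hu0]
  have e2 : -(C₁ (γ 0)) * Real.sin a + C₂ (γ 0) * Real.cos a = C₂ (γ 0) := by
    rw [← hv2, hvc, hv0]
  -- cos a ≠ 1
  have hcosa : Real.cos a ≠ 1 := by
    intro h
    have hπ := Real.pi_pos
    have h2π : (0 : ℝ) < 2 * Real.pi := by positivity
    have hl := mul_lt_mul_of_pos_right (abs_lt.mp hω1).1 h2π
    have hr := mul_lt_mul_of_pos_right (abs_lt.mp hω1).2 h2π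
    rw [neg_one_mul] at hl
    rw [one_mul] at hr
    have h1' : -(2 * Real.pi) < a := hadef ▸ hl
    have h2' : a < 2 * Real.pi := hadef ▸ hr
    have := (Real.cos_eq_one_iff_of_lt_of_lt h1' h2').mp h
    rw [hadef] at this
    have : ω = 0 := by
      have h2π : (2 * Real.pi) ≠ 0 := by positivity
      exact (mul_eq_zero.mp this).resolve_right h2π
    exact hω0 this
  -- conclude C₁ (γ 0) = C₂ (γ 0) = 0
  have hE : (C₁ (γ 0) ^ 2 + C₂ (γ 0) ^ 2) * (1 - Real.cos a) = 0 := by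
    linear_combination (-(C₁ (γ 0))) * e1 - C₂ (γ 0) * e2
  have hE0 : C₁ (γ 0) ^ 2 + C₂ (γ 0) ^ 2 = 0 := by
    rcases mul_eq_zero.mp hE with h | h
    · exact h
    · exact absurd (by linarith : Real.cos a = 1) hcosa
  have hF0 : F (γ 0) = 0 := by
    show C₁ (γ 0) * C₁ (γ 0) + C₂ (γ 0) * C₂ (γ 0) = 0
    linear_combination hE0
  -- final conclusion
  intro p hp
  have hFp : F p = 0 := by
    rw [hFconst p hp (γ 0) (hγD 0), hF0]
  have hFp' : C₁ p ^ 2 + C₂ p ^ 2 = 0 := by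
    have : C₁ p * C₁ p + C₂ p * C₂ p = 0 := hFp
    linear_combination this
  have hsqs := (add_eq_zero_iff_of_nonneg (sq_nonneg (C₁ p)) (sq_nonneg (C₂ p))).mp hFp'
  exact ⟨pow_eq_zero_iff (two_ne_zero) |>.mp hsqs.1,
    pow_eq_zero_iff (two_ne_zero) |>.mp hsqs.2⟩
end
end

section
/- Let μ ≠ 0 and Δ be real numbers, and suppose f : U → ℝ is a smooth function on a connected open set U ⊆ {(x,y) : 1 + μ(x²+y²) > 0} containing the origin, satisfying ∂ₓ∂_y f = Δ(y² − x²)/(1 + μ(x²+y²)) and ∂²ₓ f − ∂²_y f = 4Δxy/(1 + μ(x²+y²)) on U. Then Δ = 0. -/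
noncomputable section

lemma lineX_hasDerivAt (p : ℝ × ℝ) : HasDerivAt (fun t : ℝ => (t, p.2)) ((1:ℝ), (0:ℝ)) p.1 :=
  (hasDerivAt_id p.1).prodMk (hasDerivAt_const _ _)

lemma lineY_hasDerivAt (p : ℝ × ℝ) : HasDerivAt (fun t : ℝ => (p.1, t)) ((0:ℝ), (1:ℝ)) p.2 :=
  (hasDerivAt_const _ _).prodMk (hasDerivAt_id p.2)

lemma pdx_fderiv {f : ℝ × ℝ → ℝ} {p : ℝ × ℝ} (hf : DifferentiableAt ℝ f p) :
    pdx f p = fderiv ℝ f p (1, 0) := by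
  have h := hf.hasFDerivAt.comp_hasDerivAt p.1 (by simpa using lineX_hasDerivAt p)
  exact h.deriv

lemma pdy_fderiv {f : ℝ × ℝ → ℝ} {p : ℝ × ℝ} (hf : DifferentiableAt ℝ f p) :
    pdy f p = fderiv ℝ f p (0, 1) := by
  have h := hf.hasFDerivAt.comp_hasDerivAt p.2 (by simpa using lineY_hasDerivAt p)
  exact h.deriv

lemma lineX_mem_nhds {U : Set (ℝ × ℝ)} (hU : IsOpen U) {p : ℝ × ℝ} (hp : p ∈ U) :
    ∀ᶠ t in nhds p.1, (t, p.2) ∈ U := by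
  have hc : ContinuousAt (fun t : ℝ => (t, p.2)) p.1 := by fun_prop
  have := hc.preimage_mem_nhds (by simpa using hU.mem_nhds hp)
  exact this

lemma lineY_mem_nhds {U : Set (ℝ × ℝ)} (hU : IsOpen U) {p : ℝ × ℝ} (hp : p ∈ U) :
    ∀ᶠ t in nhds p.2, (p.1, t) ∈ U := by
  have hc : ContinuousAt (fun t : ℝ => (p.1, t)) p.2 := by fun_prop
  have := hc.preimage_mem_nhds (by simpa using hU.mem_nhds hp)
  exact this

lemma pdx_congr {f g : ℝ × ℝ → ℝ} {U : Set (ℝ × ℝ)} (hU : IsOpen U) {p : ℝ × ℝ} (hp : p ∈ U)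
    (h : ∀ q ∈ U, f q = g q) : pdx f p = pdx g p := by
  apply Filter.EventuallyEq.deriv_eq
  filter_upwards [lineX_mem_nhds hU hp] with t ht using h _ ht

lemma pdy_congr {f g : ℝ × ℝ → ℝ} {U : Set (ℝ × ℝ)} (hU : IsOpen U) {p : ℝ × ℝ} (hp : p ∈ U)
    (h : ∀ q ∈ U, f q = g q) : pdy f p = pdy g p := by
  apply Filter.EventuallyEq.deriv_eq
  filter_upwards [lineY_mem_nhds hU hp] with t ht using h _ ht

lemma pdx_smooth {f : ℝ × ℝ → ℝ} {U : Set (ℝ × ℝ)} (hU : IsOpen U)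
    (hf : ContDiffOn ℝ (⊤ : ℕ∞) f U) : ContDiffOn ℝ (⊤ : ℕ∞) (pdx f) U := by
  have h1 : ContDiffOn ℝ (⊤ : ℕ∞) (fderiv ℝ f) U := hf.fderiv_of_isOpen hU (by simp)
  refine (h1.clm_apply (contDiffOn_const (c := ((1:ℝ),(0:ℝ))))).congr fun q hq => ?_
  exact pdx_fderiv ((hf.contDiffAt (hU.mem_nhds hq)).differentiableAt (by simp))

lemma pdy_smooth {f : ℝ × ℝ → ℝ} {U : Set (ℝ × ℝ)} (hU : IsOpen U)
    (hf : ContDiffOn ℝ (⊤ : ℕ∞) f U) : ContDiffOn ℝ (⊤ : ℕ∞) (pdy f) U := by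
  have h1 : ContDiffOn ℝ (⊤ : ℕ∞) (fderiv ℝ f) U := hf.fderiv_of_isOpen hU (by simp)
  refine (h1.clm_apply (contDiffOn_const (c := ((0:ℝ),(1:ℝ))))).congr fun q hq => ?_
  exact pdy_fderiv ((hf.contDiffAt (hU.mem_nhds hq)).differentiableAt (by simp))

lemma pd_symm {f : ℝ × ℝ → ℝ} {U : Set (ℝ × ℝ)} (hU : IsOpen U)
    (hf : ContDiffOn ℝ (⊤ : ℕ∞) f U) {p : ℝ × ℝ} (hp : p ∈ U) :
    pdx (pdy f) p = pdy (pdx f) p := by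
  have hdiffU : ∀ q ∈ U, DifferentiableAt ℝ f q := fun q hq =>
    (hf.contDiffAt (hU.mem_nhds hq)).differentiableAt (by simp)
  have hF' : ContDiffOn ℝ (⊤ : ℕ∞) (fderiv ℝ f) U := hf.fderiv_of_isOpen hU (by simp)
  have hF'diff : DifferentiableAt ℝ (fderiv ℝ f) p :=
    (hF'.contDiffAt (hU.mem_nhds hp)).differentiableAt (by simp)
  have hev : ∀ᶠ q in nhds p, HasFDerivAt f (fderiv ℝ f q) q := by
    filter_upwards [hU.mem_nhds hp] with q hq using (hdiffU q hq).hasFDerivAt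
  have hsymm := second_derivative_symmetric_of_eventually hev hF'diff.hasFDerivAt
  have e1 : pdx (pdy f) p = fderiv ℝ (pdy f) p (1, 0) :=
    pdx_fderiv (((pdy_smooth hU hf).contDiffAt (hU.mem_nhds hp)).differentiableAt (by simp))
  have e2 : pdy (pdx f) p = fderiv ℝ (pdx f) p (0, 1) :=
    pdy_fderiv (((pdx_smooth hU hf).contDiffAt (hU.mem_nhds hp)).differentiableAt (by simp))
  have e3 : fderiv ℝ (pdy f) p = fderiv ℝ (fun q => fderiv ℝ f q (0, 1)) p := by
    apply Filter.EventuallyEq.fderiv_eq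
    filter_upwards [hU.mem_nhds hp] with q hq using pdy_fderiv (hdiffU q hq)
  have e4 : fderiv ℝ (pdx f) p = fderiv ℝ (fun q => fderiv ℝ f q (1, 0)) p := by
    apply Filter.EventuallyEq.fderiv_eq
    filter_upwards [hU.mem_nhds hp] with q hq using pdx_fderiv (hdiffU q hq)
  rw [e1, e2, e3, e4, fderiv_clm_apply hF'diff (differentiableAt_const _),
    fderiv_clm_apply hF'diff (differentiableAt_const _)]
  simp only [fderiv_const, fderiv_const_apply, Pi.zero_apply, ContinuousLinearMap.comp_zero,
    ContinuousLinearMap.add_apply, ContinuousLinearMap.zero_apply,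
    ContinuousLinearMap.flip_apply, zero_add]
  exact hsymm _ _

def Gf (a b : ℝ) : ℝ × ℝ → ℝ := fun p => a * (p.2 ^ 2 - p.1 ^ 2) / (1 + b * (p.1 ^ 2 + p.2 ^ 2))
def Hf (a b : ℝ) : ℝ × ℝ → ℝ := fun p => 4 * a * p.1 * p.2 / (1 + b * (p.1 ^ 2 + p.2 ^ 2))

lemma sq_hasDerivAt (x : ℝ) : HasDerivAt (fun t : ℝ => t ^ 2) (2 * x) x := by
  simpa using hasDerivAt_pow 2 x

lemma hdG_x (a b x : ℝ) (h : 0 < 1 + b * (x ^ 2 + (0:ℝ) ^ 2)) :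
    HasDerivAt (fun t : ℝ => Gf a b (t, 0)) (-2 * a * x / (1 + b * x ^ 2) ^ 2) x := by
  have hne : (1 : ℝ) + b * (x ^ 2 + 0 ^ 2) ≠ 0 := ne_of_gt h
  have hne' : (1 : ℝ) + b * x ^ 2 ≠ 0 := by
    intro hc; rw [show (1:ℝ) + b * (x ^ 2 + 0 ^ 2) = 1 + b * x ^ 2 by ring, hc] at h; linarith
  have hn : HasDerivAt (fun t : ℝ => a * ((0:ℝ) ^ 2 - t ^ 2)) (a * (0 - 2 * x)) x :=
    ((hasDerivAt_const x ((0:ℝ) ^ 2)).sub (sq_hasDerivAt x)).const_mul a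
  have hd : HasDerivAt (fun t : ℝ => 1 + b * (t ^ 2 + (0:ℝ) ^ 2)) (b * (2 * x)) x :=
    (((sq_hasDerivAt x).add_const ((0:ℝ) ^ 2)).const_mul b).const_add 1
  have := hn.div hd hne
  refine this.congr_deriv ?_
  rw [show (1:ℝ) + b * (x ^ 2 + 0 ^ 2) = 1 + b * x ^ 2 by ring]
  field_simp
  ring

lemma hdG_y (a b y : ℝ) (h : 0 < 1 + b * ((0:ℝ) ^ 2 + y ^ 2)) :
    HasDerivAt (fun t : ℝ => Gf a b (0, t)) (2 * a * y / (1 + b * y ^ 2) ^ 2) y := by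
  have hne : (1 : ℝ) + b * (0 ^ 2 + y ^ 2) ≠ 0 := ne_of_gt h
  have hne' : (1 : ℝ) + b * y ^ 2 ≠ 0 := by
    intro hc; rw [show (1:ℝ) + b * (0 ^ 2 + y ^ 2) = 1 + b * y ^ 2 by ring, hc] at h; linarith
  have hn : HasDerivAt (fun t : ℝ => a * (t ^ 2 - (0:ℝ) ^ 2)) (a * (2 * y)) y :=
    ((sq_hasDerivAt y).sub_const ((0:ℝ) ^ 2)).const_mul a
  have hd : HasDerivAt (fun t : ℝ => 1 + b * ((0:ℝ) ^ 2 + t ^ 2)) (b * (2 * y)) y :=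
    (((sq_hasDerivAt y).const_add ((0:ℝ) ^ 2)).const_mul b).const_add 1
  have := hn.div hd hne
  refine this.congr_deriv ?_
  rw [show (1:ℝ) + b * (0 ^ 2 + y ^ 2) = 1 + b * y ^ 2 by ring]
  field_simp
  ring

lemma hdH_y (a b x : ℝ) (h : 0 < 1 + b * (x ^ 2 + (0:ℝ) ^ 2)) :
    HasDerivAt (fun t : ℝ => Hf a b (x, t)) (4 * a * x / (1 + b * x ^ 2)) 0 := by
  have hne : (1 : ℝ) + b * (x ^ 2 + (0:ℝ) ^ 2) ≠ 0 := ne_of_gt h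
  have hne' : (1 : ℝ) + b * x ^ 2 ≠ 0 := by
    intro hc; rw [show (1:ℝ) + b * (x ^ 2 + 0 ^ 2) = 1 + b * x ^ 2 by ring, hc] at h; linarith
  have hn : HasDerivAt (fun t : ℝ => 4 * a * x * t) (4 * a * x) 0 := by
    simpa using (hasDerivAt_id (0:ℝ)).const_mul (4 * a * x)
  have hd : HasDerivAt (fun t : ℝ => 1 + b * (x ^ 2 + t ^ 2)) (b * (2 * 0)) 0 := by
    simpa using (((sq_hasDerivAt 0).const_add (x ^ 2)).const_mul b).const_add 1
  have := hn.div hd hne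
  refine this.congr_deriv ?_
  rw [show (1:ℝ) + b * (x ^ 2 + 0 ^ 2) = 1 + b * x ^ 2 by ring]
  rw [div_eq_div_iff (pow_ne_zero 2 hne') hne']
  ring

lemma hdH_line (a b x y : ℝ) (h : (1 : ℝ) + b * (x ^ 2 + y ^ 2) ≠ 0) :
    DifferentiableAt ℝ (fun t : ℝ => Hf a b (x, t)) y := by
  have hn : HasDerivAt (fun t : ℝ => 4 * a * x * t) (4 * a * x) y := by
    simpa using (hasDerivAt_id y).const_mul (4 * a * x)
  have hd : HasDerivAt (fun t : ℝ => 1 + b * (x ^ 2 + t ^ 2)) (b * (2 * y)) y := by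
    simpa using (((sq_hasDerivAt y).const_add (x ^ 2)).const_mul b).const_add 1
  exact (hn.div hd h).differentiableAt

lemma hdF1 (a b : ℝ) :
    HasDerivAt (fun x : ℝ => -2 * a * x / (1 + b * x ^ 2) ^ 2 - 4 * a * x / (1 + b * x ^ 2))
      (-6 * a) 0 := by
  have hq : HasDerivAt (fun x : ℝ => 1 + b * x ^ 2) (b * (2 * 0)) 0 := by
    simpa using ((sq_hasDerivAt 0).const_mul b).const_add 1
  have hq2 : HasDerivAt (fun x : ℝ => (1 + b * x ^ 2) ^ 2)
      (2 * (1 + b * (0:ℝ) ^ 2) ^ 1 * (b * (2 * 0))) 0 := hq.pow 2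
  have hne2 : ((1 : ℝ) + b * (0:ℝ) ^ 2) ^ 2 ≠ 0 := by norm_num
  have hne1 : (1 : ℝ) + b * (0:ℝ) ^ 2 ≠ 0 := by norm_num
  have h1 : HasDerivAt (fun x : ℝ => -2 * a * x) (-2 * a) 0 := by
    simpa using (hasDerivAt_id (0:ℝ)).const_mul (-2 * a)
  have h2 : HasDerivAt (fun x : ℝ => 4 * a * x) (4 * a) 0 := by
    simpa using (hasDerivAt_id (0:ℝ)).const_mul (4 * a)
  have := (h1.div hq2 hne2).sub (h2.div hq hne1)
  refine this.congr_deriv ?_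
  norm_num
  ring

lemma hdF2 (a b : ℝ) :
    HasDerivAt (fun y : ℝ => 2 * a * y / (1 + b * y ^ 2) ^ 2) (2 * a) 0 := by
  have hq : HasDerivAt (fun x : ℝ => 1 + b * x ^ 2) (b * (2 * 0)) 0 := by
    simpa using ((sq_hasDerivAt 0).const_mul b).const_add 1
  have hq2 : HasDerivAt (fun x : ℝ => (1 + b * x ^ 2) ^ 2)
      (2 * (1 + b * (0:ℝ) ^ 2) ^ 1 * (b * (2 * 0))) 0 := hq.pow 2
  have hne2 : ((1 : ℝ) + b * (0:ℝ) ^ 2) ^ 2 ≠ 0 := by norm_num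
  have h1 : HasDerivAt (fun x : ℝ => 2 * a * x) (2 * a) 0 := by
    simpa using (hasDerivAt_id (0:ℝ)).const_mul (2 * a)
  have := h1.div hq2 hne2
  refine this.congr_deriv ?_
  norm_num

lemma diff_lineY {g : ℝ × ℝ → ℝ} {U : Set (ℝ × ℝ)} (hU : IsOpen U)
    (hg : ContDiffOn ℝ (⊤ : ℕ∞) g U) {p : ℝ × ℝ} (hp : p ∈ U) :
    DifferentiableAt ℝ (fun t => g (p.1, t)) p.2 := by
  have hd : DifferentiableAt ℝ g p := (hg.contDiffAt (hU.mem_nhds hp)).differentiableAt (by simp)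
  exact (hd.hasFDerivAt.comp_hasDerivAt p.2 (by simpa using lineY_hasDerivAt p)).differentiableAt

theorem stmt4 (mu Δ : ℝ) (hmu : mu ≠ 0)
    (U : Set (ℝ × ℝ)) (hUopen : IsOpen U) (hUconn : IsConnected U)
    (hU0 : (0, 0) ∈ U)
    (hUsub : U ⊆ {p : ℝ × ℝ | 1 + mu * (p.1 ^ 2 + p.2 ^ 2) > 0})
    (f : ℝ × ℝ → ℝ) (hf : ContDiffOn ℝ (⊤ : ℕ∞) f U)
    (h1 : ∀ p ∈ U, pdx (pdy f) p = Δ * (p.2 ^ 2 - p.1 ^ 2) / (1 + mu * (p.1 ^ 2 + p.2 ^ 2)))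
    (h2 : ∀ p ∈ U, pdx (pdx f) p - pdy (pdy f) p
        = 4 * Δ * p.1 * p.2 / (1 + mu * (p.1 ^ 2 + p.2 ^ 2))) :
    Δ = 0 := by
  have hDpos : ∀ p ∈ U, (0:ℝ) < 1 + mu * (p.1 ^ 2 + p.2 ^ 2) := fun p hp => hUsub hp
  have hv : ContDiffOn ℝ (⊤ : ℕ∞) (pdy f) U := pdy_smooth hUopen hf
  have hu : ContDiffOn ℝ (⊤ : ℕ∞) (pdx f) U := pdx_smooth hUopen hf
  have hw : ContDiffOn ℝ (⊤ : ℕ∞) (pdy (pdy f)) U := pdy_smooth hUopen hv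
  have h1' : ∀ q ∈ U, pdx (pdy f) q = Gf Δ mu q := fun q hq => h1 q hq
  have eq4 : ∀ p ∈ U, pdx (pdy (pdy f)) p = pdy (Gf Δ mu) p := by
    intro p hp
    rw [pd_symm hUopen hv hp]
    exact pdy_congr hUopen hp h1'
  have hyu : ∀ q ∈ U, pdy (pdx f) q = Gf Δ mu q := by
    intro q hq
    rw [← pd_symm hUopen hf hq]
    exact h1' q hq
  have hxu : ∀ q ∈ U, pdx (pdx f) q = Hf Δ mu q + pdy (pdy f) q := by
    intro q hq
    have h := h2 q hq
    have hH : Hf Δ mu q = 4 * Δ * q.1 * q.2 / (1 + mu * (q.1 ^ 2 + q.2 ^ 2)) := rfl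
    rw [hH]
    linarith
  have eq3 : ∀ p ∈ U, pdy (pdy (pdy f)) p = pdx (Gf Δ mu) p - pdy (Hf Δ mu) p := by
    intro p hp
    have hs : pdx (pdy (pdx f)) p = pdy (pdx (pdx f)) p := pd_symm hUopen hu hp
    have l1 : pdx (pdy (pdx f)) p = pdx (Gf Δ mu) p := pdx_congr hUopen hp hyu
    have l2 : pdy (pdx (pdx f)) p = pdy (fun q => Hf Δ mu q + pdy (pdy f) q) p :=
      pdy_congr hUopen hp hxu
    have l3 : pdy (fun q => Hf Δ mu q + pdy (pdy f) q) p
        = pdy (Hf Δ mu) p + pdy (pdy (pdy f)) p := by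
      have hH : DifferentiableAt ℝ (fun t => Hf Δ mu (p.1, t)) p.2 :=
        hdH_line Δ mu p.1 p.2 (ne_of_gt (hDpos p hp))
      have hW : DifferentiableAt ℝ (fun t => pdy (pdy f) (p.1, t)) p.2 := diff_lineY hUopen hw hp
      exact deriv_add hH hW
    linarith
  have hkey : pdx (pdy (pdy (pdy f))) (0, 0) = pdy (pdx (pdy (pdy f))) (0, 0) :=
    pd_symm hUopen hw hU0
  have lhs : pdx (pdy (pdy (pdy f))) ((0:ℝ), (0:ℝ)) = -6 * Δ := by
    have c1 : pdx (pdy (pdy (pdy f))) ((0:ℝ), (0:ℝ))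
        = pdx (fun q => pdx (Gf Δ mu) q - pdy (Hf Δ mu) q) ((0:ℝ), (0:ℝ)) :=
      pdx_congr hUopen hU0 eq3
    rw [c1]
    show deriv (fun x : ℝ => pdx (Gf Δ mu) (x, 0) - pdy (Hf Δ mu) (x, 0)) 0 = -6 * Δ
    have hev : (fun x : ℝ => pdx (Gf Δ mu) (x, 0) - pdy (Hf Δ mu) (x, 0)) =ᶠ[nhds 0]
        (fun x : ℝ => -2 * Δ * x / (1 + mu * x ^ 2) ^ 2 - 4 * Δ * x / (1 + mu * x ^ 2)) := by
      filter_upwards [lineX_mem_nhds hUopen hU0] with x hx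
      have hpos : (0:ℝ) < 1 + mu * (x ^ 2 + (0:ℝ) ^ 2) := by simpa using hDpos _ hx
      have e1 : pdx (Gf Δ mu) (x, 0) = -2 * Δ * x / (1 + mu * x ^ 2) ^ 2 :=
        (hdG_x Δ mu x hpos).deriv
      have e2 : pdy (Hf Δ mu) (x, 0) = 4 * Δ * x / (1 + mu * x ^ 2) :=
        (hdH_y Δ mu x hpos).deriv
      rw [e1, e2]
    rw [hev.deriv_eq]
    exact (hdF1 Δ mu).deriv
  have rhs : pdy (pdx (pdy (pdy f))) ((0:ℝ), (0:ℝ)) = 2 * Δ := by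
    have c1 : pdy (pdx (pdy (pdy f))) ((0:ℝ), (0:ℝ))
        = pdy (fun q => pdy (Gf Δ mu) q) ((0:ℝ), (0:ℝ)) :=
      pdy_congr hUopen hU0 eq4
    rw [c1]
    show deriv (fun y : ℝ => pdy (Gf Δ mu) (0, y)) 0 = 2 * Δ
    have hev : (fun y : ℝ => pdy (Gf Δ mu) (0, y)) =ᶠ[nhds 0]
        (fun y : ℝ => 2 * Δ * y / (1 + mu * y ^ 2) ^ 2) := by
      filter_upwards [lineY_mem_nhds hUopen hU0] with y hy
      have hpos : (0:ℝ) < 1 + mu * ((0:ℝ) ^ 2 + y ^ 2) := by simpa using hDpos _ hy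
      exact (hdG_y Δ mu y hpos).deriv
    rw [hev.deriv_eq]
    exact (hdF2 Δ mu).deriv
  rw [lhs, rhs] at hkey
  linarith
end
end
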